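/- arXiv:2009.00198 — 4 statements merged into one kernel-verified Lean document; each statement's English description precedes it below -/
import Mathlib

section
/- Let G be a finite bipartite graph on parts U (roads) and V (vehicle types) where the edge set of G is determined by a flow matrix f (edge (i,j) present iff f_i^j > 0). If G contains a cycle, then there exists a flow f̃ with the same row and column sums as f (i.e., same total flow per vehicle type), whose associated edge set is a strict subset of that of f (at least one cycle edge removed, no edges added). -/
/-- The bipartite graph of a flow: roads `Fin n` on one side, vehicle types
`Fin m` on the other, with an edge between road `i` and type `j` iff `f i j > 0`. -/
def flowGraph {n m : ℕ} (f : Fin n → Fin m → ℝ) : SimpleGraph (Fin n ⊕ Fin m) where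
  Adj x y := ∃ i j, 0 < f i j ∧
    ((x = Sum.inl i ∧ y = Sum.inr j) ∨ (x = Sum.inr j ∧ y = Sum.inl i))
  symm := by
    constructor
    rintro x y ⟨i, j, h, ⟨rfl, rfl⟩ | ⟨rfl, rfl⟩⟩
    · exact ⟨i, j, h, Or.inr ⟨rfl, rfl⟩⟩
    · exact ⟨i, j, h, Or.inl ⟨rfl, rfl⟩⟩
  loopless := by
    constructor
    rintro x ⟨i, j, h, ⟨rfl, hx⟩ | ⟨rfl, hx⟩⟩ <;> simp at hx

/-
Walking once around the cycle and recording `+1` for every step road → type and `-1` for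
every step type → road gives a matrix `D` with zero row and column sums, supported on the
edges of the cycle; it is nonzero because a cycle traverses its first edge only once. Then
`f - t • D`, with `t` the largest step keeping the flow nonnegative, has the same row and
column sums as `f` and vanishes where the ratio `f / D` over the positive entries of `D` is
smallest.
-/

open Finset

section Circulation

variable {α β : Type*} [DecidableEq α] [DecidableEq β]

def stepCirculation (x y : α ⊕ β) (i : α) (j : β) : ℝ :=
  (if x = .inl i ∧ y = .inr j then 1 else 0) - (if x = .inr j ∧ y = .inl i then 1 else 0)

lemma sum_stepCirculation_row [Fintype β] {x y : α ⊕ β} (hxy : x.isLeft ≠ y.isLeft) (i : α) :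
    ∑ j, stepCirculation x y i j =
      (if x = .inl i then 1 else 0) - (if y = .inl i then 1 else 0) := by
  rcases x with a | b <;> rcases y with c | d <;> simp_all [stepCirculation, ite_and, eq_comm]

lemma sum_stepCirculation_col [Fintype α] {x y : α ⊕ β} (hxy : x.isLeft ≠ y.isLeft) (j : β) :
    ∑ i, stepCirculation x y i j =
      (if y = .inr j then 1 else 0) - (if x = .inr j then 1 else 0) := by
  rcases x with a | b <;> rcases y with c | d <;> simp_all [stepCirculation, ite_and, eq_comm]

namespace SimpleGraph.Walk

variable {G : SimpleGraph (α ⊕ β)}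

def circulation : ∀ {x y : α ⊕ β}, G.Walk x y → α → β → ℝ
  | _, _, nil => 0
  | _, _, cons (u := x) (v := z) _ p => stepCirculation x z + p.circulation

lemma sum_circulation_row [Fintype β] (hG : ∀ ⦃x y⦄, G.Adj x y → x.isLeft ≠ y.isLeft)
    {x y : α ⊕ β} (p : G.Walk x y) (i : α) :
    ∑ j, p.circulation i j = (if x = .inl i then 1 else 0) - (if y = .inl i then 1 else 0) := by
  induction p with
  | nil => simp [circulation]
  | cons h p ih =>
    simp only [circulation, Pi.add_apply, sum_add_distrib, ih, sum_stepCirculation_row (hG h)]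
    ring

lemma sum_circulation_col [Fintype α] (hG : ∀ ⦃x y⦄, G.Adj x y → x.isLeft ≠ y.isLeft)
    {x y : α ⊕ β} (p : G.Walk x y) (j : β) :
    ∑ i, p.circulation i j = (if y = .inr j then 1 else 0) - (if x = .inr j then 1 else 0) := by
  induction p with
  | nil => simp [circulation]
  | cons h p ih =>
    simp only [circulation, Pi.add_apply, sum_add_distrib, ih, sum_stepCirculation_col (hG h)]
    ring

lemma circulation_eq_zero_of_notMem_edges {x y : α ⊕ β} (p : G.Walk x y) {i : α} {j : β}
    (h : s(.inl i, .inr j) ∉ p.edges) : p.circulation i j = 0 := by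
  induction p with
  | nil => rfl
  | cons _ p ih =>
    simp only [edges_cons, List.mem_cons, not_or] at h
    rw [circulation, Pi.add_apply, Pi.add_apply, ih h.2, stepCirculation, if_neg, if_neg] <;>
      [ring; (rintro ⟨rfl, rfl⟩; exact h.1 Sym2.eq_swap); (rintro ⟨rfl, rfl⟩; exact h.1 rfl)]

lemma mem_edges_of_circulation_ne_zero {x y : α ⊕ β} (p : G.Walk x y) {i : α} {j : β}
    (h : p.circulation i j ≠ 0) : s(.inl i, .inr j) ∈ p.edges :=
  not_imp_comm.1 p.circulation_eq_zero_of_notMem_edges h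

lemma IsTrail.exists_circulation_ne_zero (hG : ∀ ⦃x y⦄, G.Adj x y → x.isLeft ≠ y.isLeft)
    {x y : α ⊕ β} {p : G.Walk x y} (hp : p.IsTrail) (hne : ¬ p.Nil) :
    ∃ i j, p.circulation i j ≠ 0 := by
  cases p with
  | nil => exact absurd .nil hne
  | cons h q =>
    rw [isTrail_cons] at hp
    have hfirst := hG h
    rename_i z
    rcases x with a | b <;> rcases z with c | d <;> simp at hfirst
    · exact ⟨a, d, by simp [circulation, q.circulation_eq_zero_of_notMem_edges hp.2,
        stepCirculation]⟩
    · rw [Sym2.eq_swap] at hp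
      exact ⟨c, b, by simp [circulation, q.circulation_eq_zero_of_notMem_edges hp.2,
        stepCirculation]⟩

lemma IsCircuit.exists_circulation_pos [Fintype β]
    (hG : ∀ ⦃x y⦄, G.Adj x y → x.isLeft ≠ y.isLeft) {v : α ⊕ β} {p : G.Walk v v}
    (hp : p.IsCircuit) : ∃ i j, 0 < p.circulation i j := by
  obtain ⟨i, j, hij⟩ := hp.isTrail.exists_circulation_ne_zero hG hp.not_nil
  obtain ⟨j', -, hj'⟩ := exists_pos_of_sum_zero_of_exists_nonzero (p.circulation i)
    (by rw [sum_circulation_row hG, sub_self]) ⟨j, mem_univ j, hij⟩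
  exact ⟨i, j', hj'⟩

end SimpleGraph.Walk

end Circulation

lemma exists_smul_le_and_eq {ι : Type*} [Fintype ι] {f d : ι → ℝ} (hf : 0 ≤ f)
    (hd : ∃ k, 0 < d k) : ∃ t : ℝ, t • d ≤ f ∧ ∃ k, 0 < d k ∧ t * d k = f k := by
  obtain ⟨k₀, hk₀⟩ := hd
  obtain ⟨k, hk, hmin⟩ := (univ.filter (0 < d ·)).exists_min_image (fun k => f k / d k)
    ⟨k₀, by simpa using hk₀⟩
  rw [mem_filter] at hk
  refine ⟨f k / d k, fun l => ?_, k, hk.2, div_mul_cancel₀ _ hk.2.ne'⟩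
  rcases lt_or_ge 0 (d l) with hl | hl
  · exact (le_div_iff₀ hl).1 (hmin l (by simpa using hl))
  · exact (mul_nonpos_of_nonneg_of_nonpos (div_nonneg (hf k) hk.2.le) hl).trans (hf l)

lemma flowGraph_adj_isLeft_ne {n m : ℕ} {f : Fin n → Fin m → ℝ} ⦃x y : Fin n ⊕ Fin m⦄
    (h : (flowGraph f).Adj x y) : x.isLeft ≠ y.isLeft := by
  rcases h with ⟨i, j, -, ⟨rfl, rfl⟩ | ⟨rfl, rfl⟩⟩ <;> simp

lemma pos_of_flowGraph_adj {n m : ℕ} {f : Fin n → Fin m → ℝ} {i : Fin n} {j : Fin m}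
    (h : (flowGraph f).Adj (.inl i) (.inr j)) : 0 < f i j := by
  obtain ⟨i', j', h, ⟨hi, hj⟩ | ⟨hi, -⟩⟩ := h
  · cases hi; cases hj; exact h
  · cases hi

lemma pos_of_circulation_ne_zero {n m : ℕ} {f : Fin n → Fin m → ℝ} {x y : Fin n ⊕ Fin m}
    (p : (flowGraph f).Walk x y) {i : Fin n} {j : Fin m} (h : p.circulation i j ≠ 0) :
    0 < f i j :=
  pos_of_flowGraph_adj (p.adj_of_mem_edges (p.mem_edges_of_circulation_ne_zero h))

/-- If the bipartite graph of a nonnegative flow `f` contains a cycle, then there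
is a flow `f̃` with the same row and column sums whose edge set is a strict subset
of that of `f`: no new edges, and at least one edge removed. -/
theorem cycle_breaking_flow
    (n m : ℕ) (f : Fin n → Fin m → ℝ) (hf : ∀ i j, 0 ≤ f i j)
    (hcyc : ∃ (v : Fin n ⊕ Fin m) (p : (flowGraph f).Walk v v), p.IsCycle) :
    ∃ ftil : Fin n → Fin m → ℝ,
      (∀ i j, 0 ≤ ftil i j) ∧
      (∀ i, ∑ j, ftil i j = ∑ j, f i j) ∧
      (∀ j, ∑ i, ftil i j = ∑ i, f i j) ∧
      (∀ i j, 0 < ftil i j → 0 < f i j) ∧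
      (∃ i j, 0 < f i j ∧ ftil i j = 0) := by
  obtain ⟨v, p, hp⟩ := hcyc
  set D := p.circulation
  have hsupp : ∀ i j, D i j ≠ 0 → 0 < f i j := fun i j => pos_of_circulation_ne_zero p
  obtain ⟨i₀, j₀, hpos⟩ := hp.isCircuit.exists_circulation_pos flowGraph_adj_isLeft_ne
  obtain ⟨t, hle, ⟨i, j⟩, hij, heq⟩ := exists_smul_le_and_eq (f := Function.uncurry f)
    (d := Function.uncurry D) (fun k => hf k.1 k.2) ⟨(i₀, j₀), hpos⟩
  refine ⟨fun i j => f i j - t * D i j, fun i j => sub_nonneg.2 (hle (i, j)), fun i => ?_,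
    fun j => ?_, fun i j h => ?_, i, j, hsupp i j hij.ne', sub_eq_zero.2 heq.symm⟩
  · simp [sum_sub_distrib, ← mul_sum, D, p.sum_circulation_row flowGraph_adj_isLeft_ne]
  · simp [sum_sub_distrib, ← mul_sum, D, p.sum_circulation_col flowGraph_adj_isLeft_ne]
  · by_cases hD : D i j = 0
    · simpa [hD] using h
    · exact hsupp i j hD
end

section
/- Let f ∈ ℝ_{≥0}^{n×m} and let d ∈ ℝ^{n×m} encode a cycle shift: for a simple cycle through roads 1,...,r and types 1,...,r with f_k^k > 0 for all k ∈ [r], set d_1^1 = -1, d_1^r = 1, d_i^{i-1} = 1, d_i^i = -1 for 2 ≤ i ≤ r, and d_i^j = 0 otherwise. Then for ᾱ = min_{k∈[r]} f_k^k, the flow f + ᾱ d is nonnegative, satisfies ∑_i (f + ᾱd)_i^j = ∑_i f_i^j for all j, and has at least one fewer positive entry than f among the entries (k,k), k ∈ [r]. -/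
/-!
Along the cycle, column `j` of the shift `d` moves one unit of type `j` from road `j` to road
`j + 1 (mod r)`, so every column sums to zero and the type totals are preserved. The only negative
entries of `d` are the diagonal ones `(k, k)`, `k < r`, where `f` is at least its minimum `ᾱ`,
so `f + ᾱ d ≥ 0`; and the diagonal entry attaining the minimum drops to zero.
-/

open Finset

/-- The paper's cycle shift `d_i^j`, with roads `i` and types `j` numbered from `0`. -/
def cycleShift (r i j : ℕ) : ℝ :=
  if i < r ∧ j < r then
    (if j = i then -1 else if (j + 1) % r = i then 1 else 0)
  else 0

lemma Nat.add_one_mod_ne_self {r : ℕ} (hr : 1 < r) (j : ℕ) : (j + 1) % r ≠ j := by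
  rcases lt_or_ge j r with hj | hj
  · rcases Nat.lt_or_ge (j + 1) r with h | h
    · rw [Nat.mod_eq_of_lt h]; omega
    · rw [show j + 1 = r by omega, Nat.mod_self]; omega
  · exact ((Nat.mod_lt _ (by omega)).trans_le hj).ne

lemma Fin.sum_ite_val_eq {M : Type*} [AddCommMonoid M] {n c : ℕ} (hc : c < n) (x : M) :
    ∑ i : Fin n, (if i.val = c then x else 0) = x := by
  simp_rw [← Fin.ext_iff (b := ⟨c, hc⟩)]
  simp

lemma cycleShift_self {r k : ℕ} (hk : k < r) : cycleShift r k k = -1 := by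
  simp [cycleShift, hk]

lemma cycleShift_nonneg_of_ne {r i j : ℕ} (h : i ≠ j) : 0 ≤ cycleShift r i j := by
  unfold cycleShift
  split_ifs <;> first | (exfalso; omega) | norm_num

lemma cycleShift_eq_of_lt {r j : ℕ} (hr : 1 < r) (hj : j < r) (i : ℕ) :
    cycleShift r i j =
      (if i = j then -1 else 0) + (if i = (j + 1) % r then 1 else 0) := by
  have hlt : (j + 1) % r < r := Nat.mod_lt _ (by omega)
  have hne := Nat.add_one_mod_ne_self hr j
  simp only [cycleShift, hj, and_true]
  generalize (j + 1) % r = c at hlt hne ⊢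
  split_ifs <;> first | (exfalso; omega) | norm_num

lemma sum_cycleShift {n r : ℕ} (hr : 1 < r) (hrn : r ≤ n) (j : ℕ) :
    ∑ i : Fin n, cycleShift r i j = 0 := by
  rcases lt_or_ge j r with hj | hj
  · simp_rw [cycleShift_eq_of_lt hr hj, sum_add_distrib]
    rw [Fin.sum_ite_val_eq (hj.trans_le hrn),
      Fin.sum_ite_val_eq ((Nat.mod_lt _ (by omega)).trans_le hrn)]
    norm_num
  · refine sum_eq_zero fun i _ => ?_
    simp [cycleShift, hj.not_gt]

lemma add_mul_cycleShift_nonneg {r i j : ℕ} {x α : ℝ} (hx : 0 ≤ x) (hα : 0 ≤ α)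
    (hdiag : i = j → i < r → α ≤ x) : 0 ≤ x + α * cycleShift r i j := by
  by_cases hij : i = j
  · subst hij
    by_cases hi : i < r
    · rw [cycleShift_self hi]; linarith [hdiag rfl hi]
    · simp [cycleShift, hi, hx]
  · nlinarith [cycleShift_nonneg_of_ne (r := r) hij]

/-- Shifting flow around a cycle by `ᾱ = min_{k<r} f k k` keeps the flow
nonnegative, preserves the total flow of each vehicle type, and zeroes out at
least one previously positive diagonal entry `(k,k)`, `k < r`. -/
theorem cycle_shift_feasible_and_breaks_cycle
    (n m r : ℕ) (hr : 2 ≤ r) (hrn : r ≤ n) (hrm : r ≤ m)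
    (f : Fin n → Fin m → ℝ) (hf : ∀ i j, 0 ≤ f i j)
    (hdiag : ∀ k (hk : k < r),
      0 < f ⟨k, hk.trans_le hrn⟩ ⟨k, hk.trans_le hrm⟩)
    (d : Fin n → Fin m → ℝ)
    (hd : ∀ i j, d i j =
      if i.val < r ∧ j.val < r then
        (if j.val = i.val then -1
         else if (j.val + 1) % r = i.val then 1 else 0)
      else 0)
    (α : ℝ)
    (hα : IsLeast {x : ℝ | ∃ k, ∃ hk : k < r,
      x = f ⟨k, hk.trans_le hrn⟩ ⟨k, hk.trans_le hrm⟩} α) :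
    (∀ i j, 0 ≤ f i j + α * d i j) ∧
    (∀ j, ∑ i, (f i j + α * d i j) = ∑ i, f i j) ∧
    (∃ k, ∃ hk : k < r,
      0 < f ⟨k, hk.trans_le hrn⟩ ⟨k, hk.trans_le hrm⟩ ∧
      f ⟨k, hk.trans_le hrn⟩ ⟨k, hk.trans_le hrm⟩ +
        α * d ⟨k, hk.trans_le hrn⟩ ⟨k, hk.trans_le hrm⟩ = 0) := by
  have hd : ∀ i j, d i j = cycleShift r i j := hd
  obtain ⟨⟨k₀, hk₀, rfl⟩, hmin⟩ := hα
  refine ⟨fun i j => ?_, fun j => ?_, ⟨k₀, hk₀, hdiag k₀ hk₀, ?_⟩⟩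
  · rw [hd]
    refine add_mul_cycleShift_nonneg (hf i j) (hf _ _) fun hij hi => ?_
    obtain rfl : j = ⟨i, hi.trans_le hrm⟩ := Fin.ext hij.symm
    exact hmin ⟨i, hi, rfl⟩
  · simp_rw [hd, sum_add_distrib, ← mul_sum, sum_cycleShift hr hrn, mul_zero, add_zero]
  · rw [hd, cycleShift_self hk₀]
    ring
end

section
/- There exists a minimizer f* of a convex quadratic social cost J (with block Hessian blocks (H_i)_{j,j'} = a_i^j + a_i^{j'}) over the flow polytope F such that the bipartite graph G(f*) (edge (i,j) iff (f*)_i^j > 0) is acyclic. -/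
open Finset

theorem List.sum_count_mk_left {α β : Type*} [DecidableEq α] [DecidableEq β] [Fintype β]
    (L : List (α × β)) (x : α) : ∑ y, L.count (x, y) = (L.map Prod.fst).count x := by
  induction L with
  | nil => simp
  | cons p L ih =>
    obtain ⟨a, b⟩ := p
    by_cases ha : a = x <;> simp [List.count_cons, sum_add_distrib, ih, ha]

theorem List.sum_count_mk_right {α β : Type*} [DecidableEq α] [DecidableEq β] [Fintype α]
    (L : List (α × β)) (y : β) : ∑ x, L.count (x, y) = (L.map Prod.snd).count y := by
  induction L with
  | nil => simp
  | cons p L ih =>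
    obtain ⟨a, b⟩ := p
    by_cases hb : b = y <;> simp [List.count_cons, sum_add_distrib, ih, hb]

namespace SimpleGraph.Walk

variable {V : Type*} [DecidableEq V] {G : SimpleGraph V} {u v : V}

def netFlow (p : G.Walk u v) (x y : V) : ℤ :=
  (p.darts.map Dart.toProd).count (x, y) - (p.darts.map Dart.toProd).count (y, x)

theorem netFlow_swap (p : G.Walk u v) (x y : V) : p.netFlow y x = -p.netFlow x y := by
  simp [netFlow]

theorem adj_of_netFlow_ne_zero {p : G.Walk u v} {x y : V} (h : p.netFlow x y ≠ 0) :
    G.Adj x y := by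
  have : (x, y) ∈ p.darts.map Dart.toProd ∨ (y, x) ∈ p.darts.map Dart.toProd := by
    by_contra! h'
    simp [netFlow, List.count_eq_zero_of_not_mem h'.1, List.count_eq_zero_of_not_mem h'.2] at h
  rcases this with h | h <;> obtain ⟨d, -, hd⟩ := List.mem_map.1 h
  · simpa [hd] using d.adj
  · simpa [hd] using d.adj.symm

theorem sum_netFlow_eq_zero [Fintype V] (p : G.Walk u u) (x : V) : ∑ y, p.netFlow x y = 0 := by
  have hfst := congrArg (List.count x) p.map_fst_darts_append
  have hsnd := congrArg (List.count x) p.cons_map_snd_darts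
  simp only [List.count_append, List.count_cons, List.count_nil] at hfst hsnd
  simp only [netFlow, sum_sub_distrib, ← Nat.cast_sum, List.sum_count_mk_left,
    List.sum_count_mk_right, List.map_map, Function.comp_def]
  omega

theorem IsTrail.netFlow_eq_one {p : G.Walk u v} (hp : p.IsTrail) {d : G.Dart}
    (hd : d ∈ p.darts) : p.netFlow d.fst d.snd = 1 := by
  have hedges : (p.darts.map Dart.edge).Nodup := hp.edges_nodup
  have hmem : d.toProd ∈ p.darts.map Dart.toProd := List.mem_map_of_mem hd
  have hrev : (d.snd, d.fst) ∉ p.darts.map Dart.toProd := by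
    intro h
    obtain ⟨d', hd', hrev⟩ := List.mem_map.1 h
    have hd'd : d' = d :=
      List.inj_on_of_nodup_map hedges hd' hd (by simp [Dart.edge, hrev, Sym2.eq_swap])
    rw [hd'd] at hrev
    exact d.adj.ne (congrArg Prod.fst hrev)
  have hnodup := hedges.of_map.map Dart.toProd_injective
  simp [netFlow, List.count_eq_one_of_mem hnodup hmem, List.count_eq_zero_of_not_mem hrev]

end SimpleGraph.Walk

section Flow

theorem exists_nonneg_add_mul_nonneg_and_eq_zero {ι : Type*} [Fintype ι] {f d : ι → ℝ}
    (hf : ∀ i, 0 ≤ f i) (hneg : ∃ i, d i < 0) (hpos : ∀ i, d i < 0 → 0 < f i) :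
    ∃ t, 0 ≤ t ∧ (∀ i, 0 ≤ f i + t * d i) ∧ ∃ i, f i ≠ 0 ∧ f i + t * d i = 0 := by
  classical
  obtain ⟨i, hi⟩ := hneg
  obtain ⟨i₀, hi₀, hmin⟩ := (univ.filter (d · < 0)).exists_min_image (fun i => f i / -d i)
    ⟨i, by simpa using hi⟩
  rw [mem_filter] at hi₀
  have hd₀ : 0 < -d i₀ := neg_pos.2 hi₀.2
  refine ⟨f i₀ / -d i₀, div_nonneg (hf i₀) hd₀.le, fun i => ?_, i₀, (hpos i₀ hi₀.2).ne', ?_⟩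
  · by_cases hdi : d i < 0
    · have := (le_div_iff₀ (neg_pos.2 hdi)).1 (hmin i (by simpa using hdi))
      linarith
    · exact add_nonneg (hf i) (mul_nonneg (div_nonneg (hf i₀) hd₀.le) (not_lt.1 hdi))
  · rw [div_neg, neg_mul, div_mul_cancel₀ _ hi₀.2.ne, add_neg_cancel]

variable {ι κ : Type*} [Fintype ι]

def flowPolytope (Fbar : κ → ℝ) : Set (ι → κ → ℝ) :=
  {f | (∀ i j, 0 ≤ f i j) ∧ ∀ j, ∑ i, f i j = Fbar j}

theorem isCompact_flowPolytope (Fbar : κ → ℝ) : IsCompact (flowPolytope (ι := ι) Fbar) := by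
  refine (isCompact_Icc (a := 0) (b := fun _ j => Fbar j)).of_isClosed_subset ?_ ?_
  · simp only [flowPolytope, Set.ofPred_and, Set.ofPred_forall]
    exact (isClosed_iInter fun i => isClosed_iInter fun j => isClosed_le continuous_const
      (by fun_prop)).inter (isClosed_iInter fun j => isClosed_eq (by fun_prop) continuous_const)
  · rintro f ⟨hf, hsum⟩
    exact ⟨fun i j => hf i j, fun i j =>
      (single_le_sum (fun i _ => hf i j) (mem_univ i)).trans_eq (hsum j)⟩

theorem flowPolytope_nonempty [Nonempty ι] {Fbar : κ → ℝ} (hFbar : ∀ j, 0 ≤ Fbar j) :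
    (flowPolytope (ι := ι) Fbar).Nonempty := by
  have hcard : (0 : ℝ) < Fintype.card ι := by exact_mod_cast Fintype.card_pos
  refine ⟨fun _ j => Fbar j / Fintype.card ι, fun _ j => div_nonneg (hFbar j) hcard.le,
    fun j => ?_⟩
  simp [mul_div_cancel₀ _ hcard.ne']

variable [Fintype κ]

def IsCirculation (d : ι → κ → ℝ) : Prop :=
  (∀ i, ∑ j, d i j = 0) ∧ ∀ j, ∑ i, d i j = 0

theorem IsCirculation.neg {d : ι → κ → ℝ} (hd : IsCirculation d) : IsCirculation (-d) :=
  ⟨fun i => by simp [hd.1 i], fun j => by simp [hd.2 j]⟩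

theorem IsCirculation.exists_neg {d : ι → κ → ℝ} (hd : IsCirculation d) (hd0 : d ≠ 0) :
    ∃ i j, d i j < 0 := by
  obtain ⟨i, hi⟩ := Function.ne_iff.1 hd0
  obtain ⟨j, hj⟩ := Function.ne_iff.1 hi
  obtain ⟨j', -, hj'⟩ := exists_pos_of_sum_zero_of_exists_nonzero (fun j => -d i j)
    (by simp [hd.1 i]) ⟨j, mem_univ _, by simpa using hj⟩
  exact ⟨i, j', neg_pos.1 hj'⟩

def socialCost (a : ι → κ → ℝ) (b : ι → ℝ) (f : ι → κ → ℝ) : ℝ :=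
  ∑ i, (∑ j, f i j) * (b i + ∑ j, a i j * f i j)

theorem socialCost_add_smul (a : ι → κ → ℝ) (b : ι → ℝ) (f : ι → κ → ℝ) {d : ι → κ → ℝ}
    (hd : ∀ i, ∑ j, d i j = 0) (t : ℝ) :
    socialCost a b (f + t • d) =
      socialCost a b f + t * ∑ i, (∑ j, f i j) * ∑ j, a i j * d i j := by
  have hload : ∀ i, ∑ j, (f + t • d) i j = ∑ j, f i j := by
    simp [sum_add_distrib, ← mul_sum, hd]
  have hquad : ∀ i, ∑ j, a i j * (f + t • d) i j =
      ∑ j, a i j * f i j + t * ∑ j, a i j * d i j := by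
    simp [mul_add, sum_add_distrib, mul_sum, mul_left_comm]
  simp only [socialCost, hload, hquad]
  rw [mul_sum, ← sum_add_distrib]
  exact sum_congr rfl fun i _ => by ring

theorem continuous_socialCost (a : ι → κ → ℝ) (b : ι → ℝ) : Continuous (socialCost a b) := by
  unfold socialCost; fun_prop

theorem exists_socialCost_le_support_ssubset {a : ι → κ → ℝ} {b : ι → ℝ} {Fbar : κ → ℝ}
    {f d : ι → κ → ℝ} (hf : f ∈ flowPolytope Fbar) (hd : IsCirculation d)
    (hdf : ∀ i j, d i j ≠ 0 → 0 < f i j) (hd0 : d ≠ 0) :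
    ∃ g ∈ flowPolytope Fbar, socialCost a b g ≤ socialCost a b f ∧
      (Function.uncurry g).support ⊂ (Function.uncurry f).support := by
  wlog hslope : ∑ i, (∑ j, f i j) * ∑ j, a i j * d i j ≤ 0 generalizing d
  · refine this hd.neg (fun i j h => hdf i j (by simpa using h)) (neg_ne_zero.2 hd0) ?_
    simp only [Pi.neg_apply, mul_neg, sum_neg_distrib]
    linarith
  obtain ⟨i, j, hij⟩ := hd.exists_neg hd0
  obtain ⟨t, ht, hnonneg, ⟨i₀, j₀⟩, hf₀, hg₀⟩ :=
    exists_nonneg_add_mul_nonneg_and_eq_zero (f := Function.uncurry f) (d := Function.uncurry d)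
      (fun p => hf.1 p.1 p.2) ⟨(i, j), hij⟩ (fun p hp => hdf p.1 p.2 hp.ne)
  refine ⟨f + t • d, ⟨fun i j => hnonneg (i, j), fun j => ?_⟩, ?_, ?_⟩
  · simp [sum_add_distrib, ← mul_sum, hd.2 j, hf.2 j]
  · rw [socialCost_add_smul a b f hd.1]
    linarith [mul_nonpos_of_nonneg_of_nonpos ht hslope]
  · refine (Set.ssubset_iff_of_subset ?_).2 ⟨(i₀, j₀), hf₀, by simpa using hg₀⟩
    rintro ⟨i, j⟩ hp
    by_contra hfij
    simp only [Function.mem_support, Function.uncurry_apply_pair, not_not] at hp hfij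
    have hdij : d i j = 0 := by
      by_contra h
      exact (hdf i j h).ne' hfij
    simp [hfij, hdij] at hp

end Flow

section FlowGraph

variable {n m : ℕ} {f : Fin n → Fin m → ℝ}

theorem flowGraph_adj_inl_inr {i : Fin n} {j : Fin m} :
    (flowGraph f).Adj (Sum.inl i) (Sum.inr j) ↔ 0 < f i j := by
  simp [flowGraph]

theorem flowGraph_not_adj_inl_inl (i i' : Fin n) : ¬(flowGraph f).Adj (Sum.inl i) (Sum.inl i') := by
  simp [flowGraph]

theorem flowGraph_not_adj_inr_inr (j j' : Fin m) : ¬(flowGraph f).Adj (Sum.inr j) (Sum.inr j') := by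
  simp [flowGraph]

theorem exists_circulation_of_isCycle {v : Fin n ⊕ Fin m} {c : (flowGraph f).Walk v v}
    (hc : c.IsCycle) :
    ∃ d : Fin n → Fin m → ℝ, IsCirculation d ∧ (∀ i j, d i j ≠ 0 → 0 < f i j) ∧ d ≠ 0 := by
  have hzero {x y} (h : ¬(flowGraph f).Adj x y) : c.netFlow x y = 0 :=
    not_imp_comm.1 c.adj_of_netFlow_ne_zero h
  refine ⟨fun i j => c.netFlow (.inl i) (.inr j), ⟨fun i => ?_, fun j => ?_⟩, fun i j h => ?_, ?_⟩
  · have := c.sum_netFlow_eq_zero (.inl i)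
    rw [Fintype.sum_sum_type, sum_eq_zero fun i' _ => hzero (flowGraph_not_adj_inl_inl i i'),
      zero_add] at this
    dsimp only
    exact_mod_cast this
  · have := c.sum_netFlow_eq_zero (.inr j)
    rw [Fintype.sum_sum_type, sum_eq_zero fun j' _ => hzero (flowGraph_not_adj_inr_inr j j'),
      add_zero] at this
    simp only [c.netFlow_swap (.inl _) (.inr j), sum_neg_distrib, neg_eq_zero] at this
    dsimp only
    exact_mod_cast this
  · exact flowGraph_adj_inl_inr.1 (c.adj_of_netFlow_ne_zero (by dsimp only at h; exact_mod_cast h))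
  · obtain ⟨d, hd⟩ : ∃ d, d ∈ c.darts := ⟨_, c.firstDart_mem_darts hc.not_nil⟩
    have h1 := hc.isTrail.netFlow_eq_one hd
    obtain ⟨i, j, -, ⟨hx, hy⟩ | ⟨hx, hy⟩⟩ := d.adj <;> rw [hx, hy] at h1
    · exact Function.ne_iff.2 ⟨i, Function.ne_iff.2 ⟨j, by simp [h1]⟩⟩
    · rw [c.netFlow_swap, neg_eq_iff_eq_neg] at h1
      exact Function.ne_iff.2 ⟨i, Function.ne_iff.2 ⟨j, by simp [h1]⟩⟩

end FlowGraph

theorem exists_acyclic_optimal_flow_general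
    (n m : ℕ) (hn : 0 < n)
    (a : Fin n → Fin m → ℝ) (b : Fin n → ℝ)
    (Fbar : Fin m → ℝ) (hFbar : ∀ j, 0 < Fbar j)
    (F : Set (Fin n → Fin m → ℝ))
    (hF : F = {f | (∀ i j, 0 ≤ f i j) ∧ ∀ j, ∑ i, f i j = Fbar j})
    (J : (Fin n → Fin m → ℝ) → ℝ)
    (hJ : ∀ f, J f = ∑ i, (∑ j, f i j) * (b i + ∑ j, a i j * f i j)) :
    ∃ fstar ∈ F, (∀ f ∈ F, J fstar ≤ J f) ∧ (flowGraph fstar).IsAcyclic := by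
  obtain rfl : F = flowPolytope Fbar := hF
  obtain rfl : J = socialCost a b := funext hJ
  have : Nonempty (Fin n) := ⟨⟨0, hn⟩⟩
  set optimal :=
    {f ∈ flowPolytope Fbar | ∀ g ∈ flowPolytope Fbar, socialCost a b f ≤ socialCost a b g}
  have hopt : optimal.Nonempty := by
    obtain ⟨f, hf, hmin⟩ := (isCompact_flowPolytope Fbar).exists_isMinOn
      (flowPolytope_nonempty fun j => (hFbar j).le) (continuous_socialCost a b).continuousOn
    exact ⟨f, hf, isMinOn_iff.1 hmin⟩
  let supportSize (f : Fin n → Fin m → ℝ) : ℕ := (Function.uncurry f).support.ncard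
  set fstar := Function.argminOn supportSize optimal hopt
  obtain ⟨hfstar, hmin⟩ : fstar ∈ optimal := Function.argminOn_mem _ _ hopt
  refine ⟨fstar, hfstar, hmin, fun v c hc => ?_⟩
  obtain ⟨d, hd, hdf, hd0⟩ := exists_circulation_of_isCycle hc
  obtain ⟨g, hg, hcost, hsupp⟩ := exists_socialCost_le_support_ssubset (b := b) hfstar hd hdf hd0
  exact Function.not_lt_argminOn supportSize optimal ⟨hg, fun h hh => hcost.trans (hmin h hh)⟩
    (Set.ncard_lt_ncard hsupp (Set.toFinite _))

/-- There exists a minimizer `f*` of the convex quadratic social cost over the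
flow polytope whose associated bipartite graph is acyclic. -/
theorem exists_acyclic_optimal_flow
    (n m : ℕ) (hn : 0 < n)
    (a : Fin n → Fin m → ℝ) (b : Fin n → ℝ)
    (Fbar : Fin m → ℝ) (hFbar : ∀ j, 0 < Fbar j)
    (F : Set (Fin n → Fin m → ℝ))
    (hF : F = {f | (∀ i j, 0 ≤ f i j) ∧ ∀ j, ∑ i, f i j = Fbar j})
    (J : (Fin n → Fin m → ℝ) → ℝ)
    (hJ : ∀ f, J f = ∑ i, (∑ j, f i j) * (b i + ∑ j, a i j * f i j))
    (hconv : ConvexOn ℝ F J) :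
    ∃ fstar ∈ F, (∀ f ∈ F, J fstar ≤ J f) ∧ (flowGraph fstar).IsAcyclic :=
  exists_acyclic_optimal_flow_general n m hn a b Fbar hFbar F hF J hJ
end

section
/- Suppose latencies ℓ_i are continuous and bounded on the compact feasible polytope F, and tolls assign P to road-type pairs outside the support of f*. If P > max over f ∈ F, i, i', j of (ℓ_i(f_i) + μ - ℓ_i(f*_i)) - ℓ_{i'}(f_{i'}), then at any equilibrium flow f̃ under these tolls, f̃_i^j = 0 for all (i,j) with (f*)_i^j = 0 (provided each type has at least one road in the support of f*). -/
theorem large_toll_forbids_off_support_flow_general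
    (n m : ℕ) (Fbar : Fin m → ℝ)
    (F : Set (Fin n → Fin m → ℝ))
    (hF : F = {f | (∀ i j, 0 ≤ f i j) ∧ ∀ j, ∑ i, f i j = Fbar j})
    (ℓ : Fin n → (Fin m → ℝ) → ℝ)
    (fstar : Fin n → Fin m → ℝ)
    (hsupp : ∀ j, ∃ i, 0 < fstar i j)
    (μ P : ℝ)
    (hP : ∀ f ∈ F, ∀ i i' : Fin n,
      (ℓ i (f i) + μ - ℓ i (fstar i)) - ℓ i' (f i') < P)
    (τ : Fin n → Fin m → ℝ)
    (hτ : ∀ i j, τ i j = if 0 < fstar i j then μ - ℓ i (fstar i) else P)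
    (c : Fin n → Fin m → (Fin n → Fin m → ℝ) → ℝ)
    (hc : ∀ i j f, c i j f = ℓ i (f i) + τ i j)
    (ftil : Fin n → Fin m → ℝ) (hftilF : ftil ∈ F)
    (heq : ∀ (j : Fin m) (i i' : Fin n), 0 < ftil i j → c i j ftil ≤ c i' j ftil) :
    ∀ i j, fstar i j = 0 → ftil i j = 0 := by
  intro i j hzero
  obtain ⟨i', hi'⟩ := hsupp j
  have hnonneg : 0 ≤ ftil i j := by
    rw [hF] at hftilF
    exact hftilF.1 i j
  have hcheaper : c i' j ftil < c i j ftil := by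
    rw [hc, hc, hτ, hτ, if_pos hi', if_neg hzero.not_gt]
    linarith [hP ftil hftilF i' i]
  exact le_antisymm (not_lt.mp fun hpos => (heq j i i' hpos).not_gt hcheaper) hnonneg

/-- For a sufficiently large penalty toll `P`, no equilibrium flow uses a
road–type pair outside the support of `f*`. -/
theorem large_toll_forbids_off_support_flow
    (n m : ℕ) (Fbar : Fin m → ℝ) (hFbar : ∀ j, 0 < Fbar j)
    (F : Set (Fin n → Fin m → ℝ))
    (hF : F = {f | (∀ i j, 0 ≤ f i j) ∧ ∀ j, ∑ i, f i j = Fbar j})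
    (ℓ : Fin n → (Fin m → ℝ) → ℝ) (hcont : ∀ i, Continuous (ℓ i))
    (fstar : Fin n → Fin m → ℝ) (hfs : ∀ i j, 0 ≤ fstar i j)
    (hsupp : ∀ j, ∃ i, 0 < fstar i j)
    (μ P : ℝ)
    (hP : ∀ f ∈ F, ∀ i i' : Fin n,
      (ℓ i (f i) + μ - ℓ i (fstar i)) - ℓ i' (f i') < P)
    (τ : Fin n → Fin m → ℝ)
    (hτ : ∀ i j, τ i j = if 0 < fstar i j then μ - ℓ i (fstar i) else P)
    (c : Fin n → Fin m → (Fin n → Fin m → ℝ) → ℝ)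
    (hc : ∀ i j f, c i j f = ℓ i (f i) + τ i j)
    (ftil : Fin n → Fin m → ℝ) (hftilF : ftil ∈ F)
    (heq : ∀ (j : Fin m) (i i' : Fin n), 0 < ftil i j → c i j ftil ≤ c i' j ftil) :
    ∀ i j, fstar i j = 0 → ftil i j = 0 :=
  large_toll_forbids_off_support_flow_general n m Fbar F hF ℓ fstar hsupp μ P hP τ hτ c hc ftil
    hftilF heq
end
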